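/- Invariance of the simplex: let x : ℝ → Fin N → Fin M → ℝ be differentiable and satisfy the graph replicator equation (d/dt) x(t) v s = F v s (x(t)) for all t, v, s. If x(0) v ∈ Δ_M for every vertex v (i.e. x(0) v s ≥ 0 for all s and ∑_s x(0) v s = 1), then x(t) v ∈ Δ_M for every vertex v and every t ≥ 0. -/

import Mathlib

open Finset Filter

/-- Expected payoff of pure strategy `s` at vertex `v` in state `x`. -/
noncomputable def pGraph {N M : ℕ} (a : Fin N → Fin N → ℝ)
    (B : Fin N → Matrix (Fin M) (Fin M) ℝ)
    (v : Fin N) (s : Fin M) (x : Fin N → Fin M → ℝ) : ℝ :=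
  ∑ r, B v s r * ((1 / ∑ w, a v w) * ∑ w, a v w * x w r)

/-- Average payoff at vertex `v` in state `x`. -/
noncomputable def phiGraph {N M : ℕ} (a : Fin N → Fin N → ℝ)
    (B : Fin N → Matrix (Fin M) (Fin M) ℝ)
    (v : Fin N) (x : Fin N → Fin M → ℝ) : ℝ :=
  ∑ s, x v s * pGraph a B v s x

/-- Graph replicator vector field. -/
noncomputable def FGraph {N M : ℕ} (a : Fin N → Fin N → ℝ)
    (B : Fin N → Matrix (Fin M) (Fin M) ℝ)
    (v : Fin N) (s : Fin M) (x : Fin N → Fin M → ℝ) : ℝ :=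
  x v s * (pGraph a B v s x - phiGraph a B v x)

/-!
Both conditions defining the simplex are governed by scalar linear equations `u' = c u`
with continuous coefficient `c`, whose solutions `u t = u 0 · exp (∫₀ᵗ c)` keep the sign
of `u 0`. For a coordinate, `u = x v s` and `c = p v s - φ v`; for the mass defect
`u = 1 - ∑ s, x v s` one has `u' = -φ v · u`, because `∑ s, x v s · (p v s - φ v) = φ v · u`.
-/

section LinearODE

variable {u c : ℝ → ℝ}

theorem eq_mul_exp_integral_of_deriv_eq_mul (hu : Differentiable ℝ u) (hc : Continuous c)
    (h : ∀ t, deriv u t = c t * u t) (t : ℝ) :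
    u t = u 0 * Real.exp (∫ τ in (0 : ℝ)..t, c τ) := by
  set g : ℝ → ℝ := fun t => ∫ τ in (0 : ℝ)..t, c τ
  have hg : ∀ t, HasDerivAt g (c t) t := fun t =>
    intervalIntegral.integral_hasDerivAt_right (hc.intervalIntegrable _ _)
      (hc.stronglyMeasurableAtFilter _ _) hc.continuousAt
  have hconst : ∀ s, HasDerivAt (fun t => u t * Real.exp (-g t)) 0 s := fun s =>
    (((h s ▸ (hu s).hasDerivAt)).mul (hg s).neg.exp).congr_deriv (by ring)
  have key := is_const_of_deriv_eq_zero (fun s => (hconst s).differentiableAt)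
    (fun s => (hconst s).deriv) t 0
  simp only [g, intervalIntegral.integral_same, neg_zero, Real.exp_zero, mul_one,
    Real.exp_neg] at key
  rw [← key, mul_assoc, inv_mul_cancel₀ (Real.exp_ne_zero _), mul_one]

theorem nonneg_of_deriv_eq_mul (hu : Differentiable ℝ u) (hc : Continuous c)
    (h : ∀ t, deriv u t = c t * u t) (h0 : 0 ≤ u 0) (t : ℝ) : 0 ≤ u t := by
  rw [eq_mul_exp_integral_of_deriv_eq_mul hu hc h t]
  positivity

theorem eq_zero_of_deriv_eq_mul (hu : Differentiable ℝ u) (hc : Continuous c)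
    (h : ∀ t, deriv u t = c t * u t) (h0 : u 0 = 0) (t : ℝ) : u t = 0 := by
  rw [eq_mul_exp_integral_of_deriv_eq_mul hu hc h t, h0, zero_mul]

end LinearODE

section GraphReplicator

variable {N M : ℕ} (a : Fin N → Fin N → ℝ) (B : Fin N → Matrix (Fin M) (Fin M) ℝ)

theorem continuous_pGraph (v : Fin N) (s : Fin M) : Continuous (pGraph a B v s) := by
  unfold pGraph
  fun_prop

theorem continuous_phiGraph (v : Fin N) : Continuous (phiGraph a B v) := by
  unfold phiGraph
  have := continuous_pGraph a B v
  fun_prop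

theorem sum_FGraph (v : Fin N) (x : Fin N → Fin M → ℝ) :
    ∑ s, FGraph a B v s x = phiGraph a B v x * (1 - ∑ s, x v s) := by
  simp only [FGraph, mul_sub, sum_sub_distrib, ← sum_mul, phiGraph]
  ring

end GraphReplicator

theorem simplex_invariant_general
    (N M : ℕ)
    (a : Fin N → Fin N → ℝ)
    (B : Fin N → Matrix (Fin M) (Fin M) ℝ)
    (x : ℝ → Fin N → Fin M → ℝ)
    (hdiff : ∀ v s, Differentiable ℝ (fun t => x t v s))
    (hode : ∀ t v s, deriv (fun τ => x τ v s) t = FGraph a B v s (x t))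
    (hinit : ∀ v, (∀ s, 0 ≤ x 0 v s) ∧ (∑ s, x 0 v s = 1)) :
    ∀ t : ℝ, 0 ≤ t → ∀ v : Fin N,
      (∀ s, 0 ≤ x t v s) ∧ (∑ s, x t v s = 1) := by
  have hx : Continuous x := continuous_pi fun w => continuous_pi fun r => (hdiff w r).continuous
  have hphi : ∀ v, Continuous fun t => phiGraph a B v (x t) := fun v =>
    (continuous_phiGraph a B v).comp hx
  intro t _ v
  refine ⟨fun s => ?_, ?_⟩
  · refine nonneg_of_deriv_eq_mul (hdiff v s)
      (((continuous_pGraph a B v s).comp hx).sub (hphi v)) (fun τ => ?_) ((hinit v).1 s) t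
    rw [hode, FGraph, mul_comm]
    rfl
  · have hdefect : ∀ τ, HasDerivAt (fun t => 1 - ∑ s, x t v s)
        (-phiGraph a B v (x τ) * (1 - ∑ s, x τ v s)) τ := fun τ => by
      have hmass : HasDerivAt (fun t => ∑ s, x t v s) (∑ s, FGraph a B v s (x τ)) τ :=
        HasDerivAt.fun_sum fun s _ => hode τ v s ▸ (hdiff v s τ).hasDerivAt
      have := (hasDerivAt_const τ (1 : ℝ)).fun_sub hmass
      rwa [sum_FGraph, zero_sub, ← neg_mul] at this
    have := eq_zero_of_deriv_eq_mul (fun τ => (hdefect τ).differentiableAt) (hphi v).neg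
      (fun τ => (hdefect τ).deriv) (by simp [(hinit v).2]) t
    linarith

theorem simplex_invariant
    (N M : ℕ) (hN : 1 ≤ N) (hM : 1 ≤ M)
    (a : Fin N → Fin N → ℝ)
    (ha : ∀ v w, 0 ≤ a v w) (haa : ∀ v, a v v = 0)
    (hd : ∀ v, 0 < ∑ w, a v w)
    (B : Fin N → Matrix (Fin M) (Fin M) ℝ)
    (x : ℝ → Fin N → Fin M → ℝ)
    (hdiff : ∀ v s, Differentiable ℝ (fun t => x t v s))
    (hode : ∀ t v s, deriv (fun τ => x τ v s) t = FGraph a B v s (x t))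
    (hinit : ∀ v, (∀ s, 0 ≤ x 0 v s) ∧ (∑ s, x 0 v s = 1)) :
    ∀ t : ℝ, 0 ≤ t → ∀ v : Fin N,
      (∀ s, 0 ≤ x t v s) ∧ (∑ s, x t v s = 1) :=
  simplex_invariant_general N M a B x hdiff hode hinit
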